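/- arXiv:2006.00098 — 5 statements merged into one kernel-verified Lean document; each statement's English description precedes it below -/
import Mathlib

section
/- Let f : ℝⁿ → ℝ be locally Lipschitz and path differentiable. Let γ : [a,b] → ℝⁿ be a Lipschitz curve such that −γ'(t) ∈ ∂ᶜf(γ(t)) for almost every t ∈ [a,b]. Then −∫_a^b ‖γ'(t)‖² dt = f(γ(b)) − f(γ(a)). -/
open MeasureTheory Filter

/-- The Clarke subdifferential of `f : ℝⁿ → ℝ`: the closed convex hull of all limits of
gradients of `f` at nearby differentiability points. -/
noncomputable def clarkeSubdiff {n : ℕ} (f : EuclideanSpace ℝ (Fin n) → ℝ)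
    (x : EuclideanSpace ℝ (Fin n)) : Set (EuclideanSpace ℝ (Fin n)) :=
  closure (convexHull ℝ
    {v | ∃ y : ℕ → EuclideanSpace ℝ (Fin n),
      (∀ k, DifferentiableAt ℝ f (y k)) ∧
      Tendsto y atTop (nhds x) ∧
      Tendsto (fun k => gradient f (y k)) atTop (nhds v)})

/-- `f` is path differentiable: along every Lipschitz curve `γ`, for a.e. `t` the curve
is differentiable at `t`, and `f ∘ γ` is differentiable at `t` with derivative
`⟪v, γ′(t)⟫` for every Clarke subgradient `v ∈ ∂ᶜf(γ t)`. -/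
def PathDifferentiable {n : ℕ} (f : EuclideanSpace ℝ (Fin n) → ℝ) : Prop :=
  ∀ (γ : ℝ → EuclideanSpace ℝ (Fin n)) (K : NNReal), LipschitzWith K γ →
    ∀ᵐ t : ℝ, ∃ d : EuclideanSpace ℝ (Fin n), HasDerivAt γ d t ∧
      ∀ v ∈ clarkeSubdiff f (γ t), HasDerivAt (f ∘ γ) (inner ℝ v d : ℝ) t

/-!
Along a path-differentiable `f`, the chain rule `(f ∘ γ)' = ⟪v, γ'⟫` holds a.e. for every
Clarke subgradient `v`; taking `v = -γ'` gives `(f ∘ γ)' = -‖γ'‖²` a.e. on `[a, b]`. Since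
`f ∘ γ` is locally Lipschitz, it is Lipschitz on `[a, b]`, hence absolutely continuous there,
and the fundamental theorem of calculus for absolutely continuous functions concludes.
-/

open Set

theorem LocallyLipschitz.absolutelyContinuousOnInterval {X : Type*} [PseudoMetricSpace X]
    {g : ℝ → X} (hg : LocallyLipschitz g) (a b : ℝ) : AbsolutelyContinuousOnInterval g a b := by
  obtain ⟨K, hK⟩ := hg.locallyLipschitzOn.exists_lipschitzOnWith_of_compact isCompact_uIcc
  exact hK.absolutelyContinuousOnInterval

theorem AbsolutelyContinuousOnInterval.integral_eq_sub_of_ae_hasDerivAt {g φ : ℝ → ℝ}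
    {a b : ℝ} (hg : AbsolutelyContinuousOnInterval g a b)
    (hφ : ∀ᵐ t, t ∈ uIoc a b → HasDerivAt g (φ t) t) :
    ∫ t in a..b, φ t = g b - g a := by
  rw [← hg.integral_deriv_eq_sub]
  refine intervalIntegral.integral_congr_ae ?_
  filter_upwards [hφ] with t ht hmem
  exact (ht hmem).deriv.symm

theorem PathDifferentiable.ae_hasDerivAt_comp {n : ℕ} {f : EuclideanSpace ℝ (Fin n) → ℝ}
    (hf : PathDifferentiable f) {γ γ' : ℝ → EuclideanSpace ℝ (Fin n)} {K : NNReal}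
    (hγ : LipschitzWith K γ) :
    ∀ᵐ t, HasDerivAt γ (γ' t) t →
      ∀ v ∈ clarkeSubdiff f (γ t), HasDerivAt (f ∘ γ) (inner ℝ v (γ' t)) t := by
  filter_upwards [hf γ K hγ] with t ⟨d, hd, hfd⟩ hγt
  rwa [hd.unique hγt] at hfd

/-- (Descent identity.) If `f` is locally Lipschitz and path
differentiable and `γ : [a,b] → ℝⁿ` is a Lipschitz curve with `−γ′(t) ∈ ∂ᶜf(γ t)`
for a.e. `t ∈ [a,b]`, then `−∫_a^b ‖γ′(t)‖² dt = f(γ b) − f(γ a)`. -/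
theorem stmt7 {n : ℕ} (f : EuclideanSpace ℝ (Fin n) → ℝ)
    (hf_lip : LocallyLipschitz f) (hf_pd : PathDifferentiable f)
    (a b : ℝ) (hab : a ≤ b)
    (γ γ' : ℝ → EuclideanSpace ℝ (Fin n)) (K : NNReal) (hγ : LipschitzWith K γ)
    (hder : ∀ᵐ t : ℝ, t ∈ Set.Icc a b →
      HasDerivAt γ (γ' t) t ∧ -γ' t ∈ clarkeSubdiff f (γ t)) :
    -∫ t in a..b, ‖γ' t‖ ^ 2 = f (γ b) - f (γ a) := by
  have hdescent : ∀ᵐ t, t ∈ uIoc a b → HasDerivAt (f ∘ γ) (-‖γ' t‖ ^ 2) t := by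
    filter_upwards [hder, hf_pd.ae_hasDerivAt_comp (γ' := γ') hγ] with t hder_t hchain ht
    obtain ⟨hγt, hsub⟩ := hder_t (uIcc_of_le hab ▸ uIoc_subset_uIcc ht)
    simpa [inner_neg_left, real_inner_self_eq_norm_sq] using hchain hγt _ hsub
  rw [← intervalIntegral.integral_neg]
  exact ((hf_lip.comp hγ.locallyLipschitz).absolutelyContinuousOnInterval a b
    |>.integral_eq_sub_of_ae_hasDerivAt hdescent)
end

section
/- Let f : ℝ → ℝ be a convex function. Then f is path differentiable: for every Lipschitz curve γ : ℝ → ℝ, for almost every t, the composition f∘γ is differentiable at t and (f∘γ)'(t) = v·γ'(t) for all v ∈ ∂f(γ(t)), where ∂f is the (convex) subdifferential. -/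
/-!
A convex function on `ℝ` is locally Lipschitz, hence so is `f ∘ γ`, and Rademacher's theorem
makes both `γ` and `f ∘ γ` differentiable almost everywhere. At such a point `t`, any subgradient
`v` at `γ t` makes `s ↦ f (γ s) - v * γ s` minimal at `t`, so by Fermat's rule its derivative
`(f ∘ γ)'(t) - v * γ'(t)` vanishes.
-/

open Filter

/-- The subdifferential of a convex function `f : ℝ → ℝ`. -/
def convexSubdiff (f : ℝ → ℝ) (x : ℝ) : Set ℝ :=
  {v | ∀ y : ℝ, f x + v * (y - x) ≤ f y}

open MeasureTheory Metric

section Rademacher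

variable {E F : Type*} [NormedAddCommGroup E] [NormedSpace ℝ E] [FiniteDimensional ℝ E]
  [MeasurableSpace E] [BorelSpace E] [NormedAddCommGroup F] [NormedSpace ℝ F]
  [FiniteDimensional ℝ F] (μ : Measure E) [μ.IsAddHaarMeasure]

theorem LocallyLipschitz.ae_differentiableAt {f : E → F} (hf : LocallyLipschitz f) :
    ∀ᵐ x ∂μ, DifferentiableAt ℝ f x := by
  have H (n : ℕ) : ∀ᵐ x ∂μ, x ∈ ball (0 : E) n → DifferentiableWithinAt ℝ f (ball 0 n) x := by
    obtain ⟨K, hK⟩ :=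
      hf.locallyLipschitzOn.exists_lipschitzOnWith_of_compact (isCompact_closedBall (0 : E) n)
    exact (hK.mono ball_subset_closedBall).ae_differentiableWithinAt_of_mem
  filter_upwards [ae_all_iff.2 H] with x hx
  obtain ⟨n, hn⟩ := exists_nat_gt ‖x‖
  have hxn : x ∈ ball (0 : E) n := mem_ball_zero_iff.2 hn
  exact (hx n hxn).differentiableAt (isOpen_ball.mem_nhds hxn)

end Rademacher

theorem HasDerivAt.eq_mul_of_mem_convexSubdiff {f γ : ℝ → ℝ} {t d e v : ℝ}
    (hγ : HasDerivAt γ d t) (hfγ : HasDerivAt (f ∘ γ) e t) (hv : v ∈ convexSubdiff f (γ t)) :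
    e = v * d := by
  have hmin : IsLocalMin (fun s ↦ (f ∘ γ) s - v * γ s) t :=
    Eventually.of_forall fun s ↦ by
      have := hv (γ s)
      simp only [Function.comp_apply]
      linarith
  exact sub_eq_zero.1 (hmin.hasDerivAt_eq_zero (hfγ.sub (hγ.const_mul v)))

/-- A convex function `f : ℝ → ℝ` is path differentiable: for every
Lipschitz curve `γ : ℝ → ℝ`, for a.e. `t` the curve is differentiable at `t` and
`f ∘ γ` is differentiable at `t` with derivative `v * γ′(t)` for every subgradient
`v ∈ ∂f(γ t)`. -/
theorem stmt9 (f : ℝ → ℝ) (hf : ConvexOn ℝ Set.univ f) :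
    ∀ (γ : ℝ → ℝ) (K : NNReal), LipschitzWith K γ →
      ∀ᵐ t : ℝ, ∃ d : ℝ, HasDerivAt γ d t ∧
        ∀ v ∈ convexSubdiff f (γ t), HasDerivAt (f ∘ γ) (v * d) t := by
  intro γ K hγ
  have hfγ : LocallyLipschitz (f ∘ γ) := hf.locallyLipschitz.comp hγ.locallyLipschitz
  filter_upwards [hγ.ae_differentiableAt, hfγ.ae_differentiableAt volume] with t hγt hfγt
  refine ⟨deriv γ t, hγt.hasDerivAt, fun v hv ↦ ?_⟩
  rw [← hγt.hasDerivAt.eq_mul_of_mem_convexSubdiff hfγt.hasDerivAt hv]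
  exact hfγt.hasDerivAt
end

section
/- The essential accumulation set essacc{x_i} of a bounded sequence {x_i} ⊂ ℝⁿ with respect to positive weights ε_i with Σε_i = ∞ is a closed (hence compact) subset of ℝⁿ, contained in the ordinary accumulation set acc{x_i}, and is nonempty. -/
/-!
Call a set `U` negligible when the weighted proportion of times `i ≤ N` with `x i ∈ U` tends to
`0`. Negligible sets are stable under subsets and finite unions, so their complements form a
filter, and `essAcc` is exactly the set of cluster points of this filter. Everything then follows
from general topology: the cluster points of a filter form a closed set; since `Σ ε_i = ∞`, the
complement of a set visited only finitely often is negligible, so the filter is finer than the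
sequence's filter `map x atTop`, whose cluster points form `acc{x_i}`; the filter is proper
because `univ` has proportion `1`, and it contains the compact set `K`, so it has a cluster point
in `K`.
-/

open Filter Finset Classical
noncomputable section

/-- The essential accumulation set of a sequence `x` with respect to time weights `ε`:
points all whose neighborhoods carry a positive asymptotic proportion of the total time. -/
def essAcc {n : ℕ} (ε : ℕ → ℝ) (x : ℕ → EuclideanSpace ℝ (Fin n)) :
    Set (EuclideanSpace ℝ (Fin n)) :=
  {p | ∀ U ∈ nhds p,
    0 < Filter.limsup (fun N =>
      (∑ i ∈ range (N + 1), if x i ∈ U then ε i else 0) /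
        ∑ i ∈ range (N + 1), ε i) atTop}

open Topology

lemma tendsto_nhds_zero_iff_limsup_nonpos {α : Type*} {l : Filter α} [NeBot l] {f : α → ℝ}
    (hf₀ : ∀ a, 0 ≤ f a) (hf : IsBoundedUnder (· ≤ ·) l f) :
    Tendsto f l (𝓝 0) ↔ limsup f l ≤ 0 :=
  ⟨fun h => h.limsup_eq.le, fun h =>
    tendsto_of_le_liminf_of_limsup_le
      (le_liminf_of_le hf.isCoboundedUnder_ge (Eventually.of_forall hf₀)) h hf
      (isBoundedUnder_of ⟨0, hf₀⟩)⟩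

lemma clusterPt_comk_iff {X : Type*} [TopologicalSpace X] {p : X} {P : Set X → Prop}
    {he hmono hunion} :
    ClusterPt p (comk P he hmono hunion) ↔ ∀ U ∈ 𝓝 p, ¬ P U := by
  simp only [clusterPt_iff_frequently, Filter.Frequently, Filter.Eventually, mem_comk,
    Set.compl_ofPred, not_not, Set.ofPred_mem_eq]

section Occupation

variable {X : Type*} {ε : ℕ → ℝ} (x : ℕ → X)

variable (ε) in
def occupationRatio (U : Set X) (N : ℕ) : ℝ :=
  (∑ i ∈ range (N + 1), if x i ∈ U then ε i else 0) / ∑ i ∈ range (N + 1), ε i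

lemma occupationRatio_empty : occupationRatio ε x ∅ = 0 := by
  funext N
  simp [occupationRatio]

variable (hε : ∀ i, 0 ≤ ε i)
include hε

lemma occupationRatio_nonneg (U : Set X) (N : ℕ) : 0 ≤ occupationRatio ε x U N := by
  unfold occupationRatio
  refine div_nonneg (sum_nonneg fun i _ => ?_) (sum_nonneg fun i _ => hε i)
  split_ifs <;> simp [hε i]

lemma occupationRatio_mono {U V : Set X} (hUV : U ⊆ V) (N : ℕ) :
    occupationRatio ε x U N ≤ occupationRatio ε x V N := by
  refine div_le_div_of_nonneg_right (sum_le_sum fun i _ => ?_) (sum_nonneg fun i _ => hε i)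
  by_cases hU : x i ∈ U
  · simp [hU, hUV hU]
  · split_ifs <;> simp [hε i]

lemma occupationRatio_le_one (U : Set X) (N : ℕ) : occupationRatio ε x U N ≤ 1 := by
  refine div_le_one_of_le₀ (sum_le_sum fun i _ => ?_) (sum_nonneg fun i _ => hε i)
  split_ifs <;> simp [hε i]

lemma occupationRatio_union_le (U V : Set X) (N : ℕ) :
    occupationRatio ε x (U ∪ V) N ≤ occupationRatio ε x U N + occupationRatio ε x V N := by
  rw [occupationRatio, occupationRatio, occupationRatio, ← add_div, ← sum_add_distrib]
  refine div_le_div_of_nonneg_right (sum_le_sum fun i _ => ?_) (sum_nonneg fun i _ => hε i)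
  by_cases hU : x i ∈ U <;> by_cases hV : x i ∈ V <;> simp [hU, hV, hε i]

lemma occupationRatio_le_of_forall_ge_notMem {U : Set X} {M : ℕ} (hM : ∀ i ≥ M, x i ∉ U)
    (N : ℕ) :
    occupationRatio ε x U N ≤ (∑ i ∈ range M, ε i) / ∑ i ∈ range (N + 1), ε i := by
  refine div_le_div_of_nonneg_right ?_ (sum_nonneg fun i _ => hε i)
  rw [← sum_filter]
  refine sum_le_sum_of_subset_of_nonneg (fun i hi => ?_) fun i _ _ => hε i
  rw [mem_filter] at hi
  exact mem_range.2 (lt_of_not_ge fun hiM => hM i hiM hi.2)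

def essFilter : Filter X :=
  comk (fun U => Tendsto (occupationRatio ε x U) atTop (𝓝 0))
    (by simp only [occupationRatio_empty]; exact tendsto_const_nhds)
    (fun _ ht _ hst => squeeze_zero (occupationRatio_nonneg x hε _)
      (occupationRatio_mono x hε hst) ht)
    (fun _ hs _ ht => squeeze_zero (occupationRatio_nonneg x hε _)
      (occupationRatio_union_le x hε _ _) (by simpa using hs.add ht))

lemma clusterPt_essFilter_iff [TopologicalSpace X] {p : X} :
    ClusterPt p (essFilter x hε) ↔ ∀ U ∈ 𝓝 p, 0 < limsup (occupationRatio ε x U) atTop := by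
  rw [essFilter, clusterPt_comk_iff]
  refine forall₂_congr fun U _ => ?_
  rw [tendsto_nhds_zero_iff_limsup_nonpos (occupationRatio_nonneg x hε U)
    (isBoundedUnder_of ⟨1, occupationRatio_le_one x hε U⟩), not_le]

variable (hdiv : Tendsto (fun N => ∑ i ∈ range N, ε i) atTop atTop)
include hdiv

lemma essFilter_le_map : essFilter x hε ≤ map x atTop := by
  intro S hS
  obtain ⟨M, hM⟩ := eventually_atTop.1 (mem_map.1 hS)
  have hden : Tendsto (fun N => ∑ i ∈ range (N + 1), ε i) atTop atTop :=
    hdiv.comp (tendsto_add_atTop_nat 1)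
  exact squeeze_zero (occupationRatio_nonneg x hε _)
    (occupationRatio_le_of_forall_ge_notMem x hε fun i hi hiS => hiS (hM i hi))
    (tendsto_const_nhds.div_atTop hden)

lemma essFilter_neBot : NeBot (essFilter x hε) := by
  refine ⟨fun hbot => ?_⟩
  have hnegl : Tendsto (occupationRatio ε x Set.univ) atTop (𝓝 0) := by
    simpa [essFilter] using empty_mem_iff_bot.2 hbot
  have hone : ∀ᶠ N in atTop, occupationRatio ε x Set.univ N = 1 := by
    filter_upwards [(hdiv.comp (tendsto_add_atTop_nat 1)).eventually_gt_atTop 0] with N hN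
    have hden : 0 < ∑ i ∈ range (N + 1), ε i := hN
    simp [occupationRatio, hden.ne']
  exact one_ne_zero (tendsto_const_nhds_iff.1 (hnegl.congr' hone))

end Occupation

/-- For a bounded sequence `{x_i} ⊂ ℝⁿ` and positive weights `ε_i` with
`Σ ε_i = ∞`, the essential accumulation set is closed (hence compact), contained in the
ordinary accumulation set, and nonempty. -/
theorem stmt13 {n : ℕ}
    (ε : ℕ → ℝ) (hεpos : ∀ i, 0 < ε i)
    (hεdiv : Tendsto (fun N => ∑ i ∈ range N, ε i) atTop atTop)
    (x : ℕ → EuclideanSpace ℝ (Fin n))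
    (K : Set (EuclideanSpace ℝ (Fin n))) (hK : IsCompact K)
    (hxK : ∀ i, x i ∈ K) :
    IsClosed (essAcc ε x) ∧ IsCompact (essAcc ε x) ∧
      essAcc ε x ⊆ {p | MapClusterPt p atTop x} ∧ (essAcc ε x).Nonempty := by
  have hε : ∀ i, 0 ≤ ε i := fun i => (hεpos i).le
  have hessAcc : essAcc ε x = {p | ClusterPt p (essFilter x hε)} :=
    Set.ext fun p => (clusterPt_essFilter_iff x hε).symm
  have hmap := essFilter_le_map x hε hεdiv
  have hKmem : K ∈ essFilter x hε := hmap (mem_map.2 (univ_mem' hxK))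
  have := essFilter_neBot x hε hεdiv
  obtain ⟨p, -, hp⟩ := hK.exists_clusterPt (le_principal_iff.2 hKmem)
  have hclosed : IsClosed {q | ClusterPt q (essFilter x hε)} := isClosed_setOfPred_clusterPt
  rw [hessAcc]
  refine ⟨hclosed, hK.of_isClosed_subset hclosed fun q hq => ?_, fun q hq => hq.mono hmap, p, hp⟩
  exact hK.isClosed.closure_eq ▸ hq.mem_closure_of_mem _ hKmem
end
end

section
/- Let ν be a Borel probability measure on the space Lip_L of L-Lipschitz curves γ : ℝ → ℝⁿ (with the topology of uniform convergence on compacts) that is invariant under all time translations τ_t(γ)(s) = γ(s+t). Then for every C^∞ function φ : ℝⁿ → ℝ, ∫_{Lip_L} ∇φ(γ(0))·γ'(0) dν(γ) = 0, i.e., the pushforward of ν under γ ↦ (γ(0), γ'(0)) is a closed measure. -/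
open MeasureTheory Filter Topology

noncomputable instance (n : ℕ) :
    MeasurableSpace C(ℝ, EuclideanSpace ℝ (Fin n)) := borel _

/-- The time-translation `τ_t` on curves: `(τ_t γ)(s) = γ(s + t)`. -/
noncomputable def timeShift {n : ℕ} (t : ℝ)
    (γ : C(ℝ, EuclideanSpace ℝ (Fin n))) : C(ℝ, EuclideanSpace ℝ (Fin n)) :=
  γ.comp ⟨fun s => s + t, by continuity⟩

instance (n : ℕ) : BorelSpace C(ℝ, EuclideanSpace ℝ (Fin n)) := ⟨rfl⟩

namespace Stmt14

variable {n : ℕ}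

lemma timeShift_apply (t s : ℝ) (γ : C(ℝ, EuclideanSpace ℝ (Fin n))) :
    timeShift t γ s = γ (s + t) := rfl

lemma continuous_timeShift :
    Continuous fun p : ℝ × C(ℝ, EuclideanSpace ℝ (Fin n)) => timeShift p.1 p.2 := by
  have hcur : Continuous fun t : ℝ =>
      (ContinuousMap.curry ⟨fun q : ℝ × ℝ => q.2 + q.1, by continuity⟩) t :=
    (ContinuousMap.curry _).continuous
  have h := (ContinuousMap.continuous_comp' (X := ℝ) (Y := ℝ)
      (Z := EuclideanSpace ℝ (Fin n))).comp
      ((hcur.comp continuous_fst).prodMk continuous_snd)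
  exact h.congr fun p => ContinuousMap.ext fun s => rfl

lemma measurable_timeShift (t : ℝ) :
    Measurable (timeShift (n := n) t) :=
  (continuous_timeShift.comp (continuous_const.prodMk continuous_id)).measurable

lemma lipschitz_timeShift {L : NNReal} {γ : C(ℝ, EuclideanSpace ℝ (Fin n))}
    (h : LipschitzWith L ⇑γ) (t : ℝ) :
    LipschitzWith L ⇑(timeShift t γ) := by
  have h1 : LipschitzWith 1 (fun s : ℝ => s + t) :=
    LipschitzWith.of_dist_le_mul fun x y => by simp [Real.dist_eq]
  have := h.comp h1
  rw [mul_one] at this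
  exact this

lemma deriv_timeShift (t s : ℝ) (γ : C(ℝ, EuclideanSpace ℝ (Fin n))) :
    deriv (⇑(timeShift t γ)) s = deriv (⇑γ) (s + t) := by
  have h : ⇑(timeShift (n := n) t γ) = fun x => γ (x + t) := rfl
  rw [h, deriv_comp_add_const]

lemma hasDerivAt_phi_comp {φ : EuclideanSpace ℝ (Fin n) → ℝ} (hφ : ContDiff ℝ (⊤ : ℕ∞) φ)
    (γ : C(ℝ, EuclideanSpace ℝ (Fin n))) {t : ℝ} (hd : DifferentiableAt ℝ (⇑γ) t) :
    HasDerivAt (fun s => φ (γ s)) (inner ℝ (gradient φ (γ t)) (deriv (⇑γ) t) : ℝ) t := by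
  have h1 : HasFDerivAt φ (fderiv ℝ φ (γ t)) (γ t) :=
    (hφ.differentiable (by simp) (γ t)).hasFDerivAt
  have h3 := h1.comp_hasDerivAt t hd.hasDerivAt
  have h4 : (inner ℝ (gradient φ (γ t)) (deriv (⇑γ) t) : ℝ)
      = fderiv ℝ φ (γ t) (deriv (⇑γ) t) := by
    simp [gradient, InnerProductSpace.toDual_symm_apply]
  rw [h4]
  exact h3

lemma slice_integral {L : NNReal} {φ : EuclideanSpace ℝ (Fin n) → ℝ} (hφ : ContDiff ℝ (⊤ : ℕ∞) φ)
    (γ : C(ℝ, EuclideanSpace ℝ (Fin n))) (hγ : LipschitzWith L ⇑γ) :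
    ∫ t in Set.Ioc (0:ℝ) 1, (inner ℝ (gradient φ (γ t)) (deriv (⇑γ) t) : ℝ)
      = φ (γ 1) - φ (γ 0) := by
  set f : ℝ → ℝ := fun t => φ (γ t) with hfdef
  have hf_cont : Continuous f := hφ.continuous.comp γ.continuous
  -- a Lipschitz bound for f on Icc (-1) 2
  obtain ⟨C, hC⟩ := (isCompact_closedBall (γ 0) (2*(L:ℝ)+1)).exists_bound_of_continuousOn
      ((hφ.continuous_fderiv (by simp)).continuousOn)
  set Cn : NNReal := ⟨max C 0, le_max_right _ _⟩ with hCn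
  have hφlip : LipschitzOnWith Cn φ (Metric.closedBall (γ 0) (2*(L:ℝ)+1)) := by
    apply (convex_closedBall _ _).lipschitzOnWith_of_nnnorm_fderiv_le
      (fun x _ => hφ.differentiable (by simp) x)
    intro x hx
    have h1 : ‖fderiv ℝ φ x‖ ≤ max C 0 := le_trans (hC x hx) (le_max_left _ _)
    rw [← NNReal.coe_le_coe]
    exact h1
  have hmap : Set.MapsTo (⇑γ) (Set.Icc (-1:ℝ) 2) (Metric.closedBall (γ 0) (2*(L:ℝ)+1)) := by
    intro t ht
    have h1 := hγ.dist_le_mul t 0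
    rw [Metric.mem_closedBall]
    have h2 : |t| ≤ 2 := by
      rw [abs_le]; exact ⟨by linarith [ht.1], ht.2⟩
    have h3 : dist t 0 ≤ 2 := by rwa [Real.dist_eq, sub_zero]
    nlinarith [dist_nonneg (x := γ t) (y := γ 0), L.coe_nonneg]
  have hflip : LipschitzOnWith (Cn * L) f (Set.Icc (-1:ℝ) 2) :=
    hφlip.comp ((hγ.lipschitzOnWith) : LipschitzOnWith L (⇑γ) (Set.Icc (-1:ℝ) 2)) hmap
  set K : ℝ := (Cn : ℝ) * (L : ℝ) with hK
  -- the sequence of difference quotients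
  set h : ℕ → ℝ := fun k => 1 / ((k : ℝ) + 1) with hh
  have hpos : ∀ k, 0 < h k := fun k => by positivity
  have hle1 : ∀ k, h k ≤ 1 := fun k => by
    rw [hh, div_le_one (by positivity)]
    have : (0:ℝ) ≤ (k:ℝ) := Nat.cast_nonneg k
    linarith
  set F : ℕ → ℝ → ℝ := fun k t => (f (t + h k) - f t) / h k with hF
  set g2 : ℝ → ℝ := fun t => (inner ℝ (gradient φ (γ t)) (deriv (⇑γ) t) : ℝ) with hg2
  set m : Measure ℝ := volume.restrict (Set.Ioc (0:ℝ) 1) with hm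
  -- measurability of g2
  have hgrad : Continuous fun t => gradient φ (γ t) := by
    apply Continuous.comp
    · exact (InnerProductSpace.toDual ℝ (EuclideanSpace ℝ (Fin n))).symm.continuous
    · exact (hφ.continuous_fderiv (by simp)).comp γ.continuous
  have hg2m : AEStronglyMeasurable g2 m :=
    (Measurable.inner hgrad.measurable (measurable_deriv _)).aestronglyMeasurable
  -- a.e. convergence of the quotients
  have hconv : ∀ᵐ t ∂m, Tendsto (fun k => F k t) atTop (𝓝 (g2 t)) := by
    filter_upwards [ae_restrict_of_ae (hγ.ae_differentiableAt (μ := volume))] with t hdiff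
    have hD := hasDerivAt_phi_comp hφ γ hdiff
    have hslope := hasDerivAt_iff_tendsto_slope.1 hD
    have hseq : Tendsto (fun k => t + h k) atTop (𝓝[≠] t) := by
      apply tendsto_nhdsWithin_of_tendsto_nhds_of_eventually_within
      · have : Tendsto (fun k : ℕ => t + h k) atTop (𝓝 (t + 0)) :=
          tendsto_const_nhds.add tendsto_one_div_add_atTop_nhds_zero_nat
        simpa using this
      · exact Eventually.of_forall fun k => by
          simp only [Set.mem_compl_iff, Set.mem_singleton_iff]
          exact fun hc => (hpos k).ne' (by linarith)
    have h5 := hslope.comp hseq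
    refine h5.congr fun k => ?_
    show slope f t (t + h k) = F k t
    rw [slope_def_field, add_sub_cancel_left]
  -- domination
  have hbound : ∀ k, ∀ᵐ t ∂m, ‖F k t‖ ≤ K := by
    intro k
    filter_upwards [ae_restrict_mem measurableSet_Ioc] with t ht
    have h1 : t ∈ Set.Icc (-1:ℝ) 2 := ⟨by linarith [ht.1], by linarith [ht.2]⟩
    have h2 : t + h k ∈ Set.Icc (-1:ℝ) 2 :=
      ⟨by linarith [ht.1, (hpos k).le], by linarith [ht.2, hle1 k]⟩
    have h3 := hflip.dist_le_mul _ h2 _ h1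
    rw [Real.dist_eq, Real.dist_eq, add_sub_cancel_left, abs_of_pos (hpos k)] at h3
    rw [Real.norm_eq_abs, hF, abs_div, abs_of_pos (hpos k), div_le_iff₀ (hpos k)]
    calc |f (t + h k) - f t| ≤ ((Cn * L : NNReal) : ℝ) * h k := h3
      _ = K * h k := by push_cast [hK]; ring
  haveI : IsFiniteMeasure m := by
    constructor
    rw [hm, Measure.restrict_apply_univ]
    simp
  have hKint : Integrable (fun _ : ℝ => K) m := integrable_const K
  have hFmeas : ∀ k, AEStronglyMeasurable (F k) m := by
    intro k
    have : Continuous (F k) :=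
      ((hf_cont.comp (continuous_id.add continuous_const)).sub hf_cont).div_const _
    exact this.aestronglyMeasurable
  have hDCT := tendsto_integral_of_dominated_convergence (μ := m) (F := F) (f := g2)
      (fun _ => K) hFmeas hKint hbound hconv
  -- identify the integrals of the quotients
  set a : ℝ → ℝ := fun x => ∫ u in (0:ℝ)..x, f u with ha
  have hIk : ∀ k, ∫ t, F k t ∂m = ((a (1 + h k) - a 1) - (a (h k) - a 0)) / h k := by
    intro k
    have e0 : ∫ t, F k t ∂m = ∫ t in (0:ℝ)..1, F k t := by
      rw [hm, intervalIntegral.integral_of_le zero_le_one]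
    have i1 : IntervalIntegrable (fun t => f (t + h k)) volume 0 1 :=
      (hf_cont.comp (continuous_id.add continuous_const)).intervalIntegrable 0 1
    have i2 : IntervalIntegrable f volume 0 1 := hf_cont.intervalIntegrable 0 1
    have e1 : ∫ t in (0:ℝ)..1, F k t
        = (∫ t in (0:ℝ)..1, (f (t + h k) - f t)) / h k := by
      rw [← intervalIntegral.integral_div]
    have e2 : ∫ t in (0:ℝ)..1, (f (t + h k) - f t)
        = (∫ t in (0:ℝ)..1, f (t + h k)) - ∫ t in (0:ℝ)..1, f t :=
      intervalIntegral.integral_sub i1 i2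
    have e3 : ∫ t in (0:ℝ)..1, f (t + h k) = a (1 + h k) - a (h k) := by
      rw [intervalIntegral.integral_comp_add_right f (h k), zero_add]
      have e4 := intervalIntegral.integral_add_adjacent_intervals
        (hf_cont.intervalIntegrable (μ := volume) 0 (h k))
        (hf_cont.intervalIntegrable (μ := volume) (h k) (1 + h k))
      have : a (h k) + ∫ x in (h k)..(1 + h k), f x = a (1 + h k) := e4
      linarith
    have e5 : a 0 = 0 := intervalIntegral.integral_same
    rw [e0, e1, e2, e3, e5]
    ring_nf
    simp only [ha]
    ring
  -- limits of the end terms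
  have hA1 : HasDerivAt a (f 1) 1 := (hf_cont.integral_hasStrictDerivAt 0 1).hasDerivAt
  have hA0 : HasDerivAt a (f 0) 0 := (hf_cont.integral_hasStrictDerivAt 0 0).hasDerivAt
  have hseq : ∀ c : ℝ, Tendsto (fun k => c + h k) atTop (𝓝[≠] c) := by
    intro c
    apply tendsto_nhdsWithin_of_tendsto_nhds_of_eventually_within
    · have : Tendsto (fun k : ℕ => c + h k) atTop (𝓝 (c + 0)) :=
        tendsto_const_nhds.add tendsto_one_div_add_atTop_nhds_zero_nat
      simpa using this
    · exact Eventually.of_forall fun k => by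
        simp only [Set.mem_compl_iff, Set.mem_singleton_iff]
        exact fun hc => (hpos k).ne' (by linarith)
  have hT1 : Tendsto (fun k => (a (1 + h k) - a 1) / h k) atTop (𝓝 (f 1)) := by
    have h5 := (hasDerivAt_iff_tendsto_slope.1 hA1).comp (hseq 1)
    refine h5.congr fun k => ?_
    show slope a 1 (1 + h k) = _
    rw [slope_def_field, add_sub_cancel_left]
  have hT0 : Tendsto (fun k => (a (0 + h k) - a 0) / h k) atTop (𝓝 (f 0)) := by
    have h5 := (hasDerivAt_iff_tendsto_slope.1 hA0).comp (hseq 0)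
    refine h5.congr fun k => ?_
    show slope a 0 (0 + h k) = _
    rw [slope_def_field, add_sub_cancel_left]
  have hlim2 : Tendsto (fun k => ∫ t, F k t ∂m) atTop (𝓝 (f 1 - f 0)) := by
    have h6 := hT1.sub hT0
    refine h6.congr fun k => ?_
    rw [hIk k, zero_add]
    ring
  have := tendsto_nhds_unique hDCT hlim2
  rw [hm] at this
  exact this

lemma trunc_lip (N a b : ℝ) :
    |max (min a N) (-N) - max (min b N) (-N)| ≤ |a - b| := by
  refine le_trans (abs_max_sub_max_le_abs _ _ _) ?_
  refine le_trans (abs_min_sub_min_le_max a N b N) ?_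
  simp

lemma integral_cobound {α : Type*} [MeasurableSpace α] (μ : Measure α)
    [IsProbabilityMeasure μ] (T : α → α) (hT : Measurable T) (hinvT : μ.map T = μ)
    {u : α → ℝ} (hu : Measurable u)
    (hint : Integrable (fun x => u (T x) - u x) μ) :
    ∫ x, (u (T x) - u x) ∂μ = 0 := by
  set v : ℕ → α → ℝ := fun N x => max (min (u x) N) (-(N:ℝ)) with hv
  have hvm : ∀ N, Measurable (v N) := fun N => (hu.min measurable_const).max measurable_const
  have hvb : ∀ (N : ℕ) (x : α), |v N x| ≤ (N : ℝ) := by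
    intro N x
    rw [abs_le]
    refine ⟨le_max_right _ _, max_le (le_trans (min_le_right _ _) le_rfl) ?_⟩
    simp
  have hvint : ∀ N, Integrable (v N) μ := fun N =>
    (integrable_const (N : ℝ)).mono' (hvm N).aestronglyMeasurable
      (Eventually.of_forall fun x => by simpa [Real.norm_eq_abs] using hvb N x)
  have hvTint : ∀ N, Integrable (fun x => v N (T x)) μ := fun N =>
    (integrable_const (N : ℝ)).mono' ((hvm N).comp hT).aestronglyMeasurable
      (Eventually.of_forall fun x => by simpa [Real.norm_eq_abs] using hvb N (T x))
  have hmap : ∀ N, ∫ x, v N (T x) ∂μ = ∫ x, v N x ∂μ := by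
    intro N
    have h1 := integral_map hT.aemeasurable
      ((hvm N).aestronglyMeasurable (μ := μ.map T))
    rw [hinvT] at h1
    exact h1.symm
  have hzero : ∀ N, ∫ x, (v N (T x) - v N x) ∂μ = 0 := by
    intro N
    rw [integral_sub (hvTint N) (hvint N), hmap N, sub_self]
  have hdom : ∀ N : ℕ, ∀ᵐ x ∂μ, ‖v N (T x) - v N x‖ ≤ |u (T x) - u x| := by
    intro N
    refine Eventually.of_forall fun x => ?_
    rw [Real.norm_eq_abs]
    exact trunc_lip _ _ _
  have hconv : ∀ᵐ x ∂μ, Tendsto (fun N => v N (T x) - v N x) atTop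
      (𝓝 (u (T x) - u x)) := by
    refine Eventually.of_forall fun x => ?_
    have hev : ∀ᶠ N : ℕ in atTop, v N (T x) - v N x = u (T x) - u x := by
      filter_upwards [eventually_ge_atTop ⌈max |u (T x)| |u x|⌉₊] with N hN
      have hN' : max |u (T x)| |u x| ≤ (N : ℝ) := le_trans (Nat.le_ceil _) (by exact_mod_cast hN)
      have h1 : |u (T x)| ≤ (N : ℝ) := le_trans (le_max_left _ _) hN'
      have h2 : |u x| ≤ (N : ℝ) := le_trans (le_max_right _ _) hN'
      have e : ∀ y : ℝ, |y| ≤ (N : ℝ) → max (min y (N:ℝ)) (-(N:ℝ)) = y := by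
        intro y hy
        rw [abs_le] at hy
        rw [min_eq_left hy.2, max_eq_left hy.1]
      rw [hv]
      simp only
      rw [e _ h1, e _ h2]
    exact Tendsto.congr' (EventuallyEq.symm hev) tendsto_const_nhds
  have hDCT := tendsto_integral_of_dominated_convergence (μ := μ)
      (F := fun N x => v N (T x) - v N x) (f := fun x => u (T x) - u x)
      (fun x => |u (T x) - u x|)
      (fun N => ((hvTint N).sub (hvint N)).aestronglyMeasurable)
      hint.abs hdom hconv
  have h0 : Tendsto (fun N : ℕ => ∫ x, (v N (T x) - v N x) ∂μ) atTop (𝓝 0) := by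
    simp only [hzero]
    exact tendsto_const_nhds
  exact (tendsto_nhds_unique hDCT h0)

end Stmt14

open Stmt14 in
/-- If `ν` is a Borel probability measure on the space of `L`-Lipschitz
curves `ℝ → ℝⁿ` (with uniform convergence on compacts) invariant under all time
translations `τ_t`, then for every smooth `φ : ℝⁿ → ℝ`,
`∫ ⟪∇φ(γ 0), γ′(0)⟫ dν(γ) = 0`; i.e. the pushforward of `ν` under
`γ ↦ (γ 0, γ′ 0)` is a closed measure. -/
theorem stmt14 {n : ℕ} (L : NNReal)
    (ν : Measure C(ℝ, EuclideanSpace ℝ (Fin n))) [IsProbabilityMeasure ν]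
    (hlip : ∀ᵐ (γ : C(ℝ, EuclideanSpace ℝ (Fin n))) ∂ν, LipschitzWith L (⇑γ))
    (hinv : ∀ t : ℝ, ν.map (timeShift t) = ν)
    (φ : EuclideanSpace ℝ (Fin n) → ℝ) (hφ : ContDiff ℝ (⊤ : ℕ∞) φ) :
    ∫ γ : C(ℝ, EuclideanSpace ℝ (Fin n)),
      (inner ℝ (gradient φ (γ 0)) (deriv (⇑γ) 0) : ℝ) ∂ν = 0 := by
  classical
  set g : C(ℝ, EuclideanSpace ℝ (Fin n)) → ℝ :=
    fun γ => (inner ℝ (gradient φ (γ 0)) (deriv (⇑γ) 0) : ℝ) with hg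
  by_cases hInt : Integrable g ν
  swap
  · exact integral_undef hInt
  set mk : C(ℝ, EuclideanSpace ℝ (Fin n)) → ℝ := hInt.1.mk g with hmk
  have hmkSM : StronglyMeasurable mk := hInt.1.stronglyMeasurable_mk
  have hgmk : g =ᵐ[ν] mk := hInt.1.ae_eq_mk
  obtain ⟨N, hsubN, hNmeas, hN0⟩ := exists_measurable_superset_of_null (ae_iff.1 hgmk)
  set m : Measure ℝ := volume.restrict (Set.Ioc (0:ℝ) 1) with hm
  haveI : IsFiniteMeasure m := by
    constructor
    rw [hm, Measure.restrict_apply_univ]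
    simp
  set Φ : ℝ × C(ℝ, EuclideanSpace ℝ (Fin n)) → C(ℝ, EuclideanSpace ℝ (Fin n)) :=
    fun p => timeShift p.1 p.2 with hΦ
  have hΦm : Measurable Φ := continuous_timeShift.measurable
  set G : ℝ × C(ℝ, EuclideanSpace ℝ (Fin n)) → ℝ := fun p => mk (Φ p) with hG
  have hGm : Measurable G := hmkSM.measurable.comp hΦm
  have hmk_int : Integrable mk ν := hInt.congr hgmk
  have hshiftm : ∀ t : ℝ, Measurable (timeShift (n := n) t) := measurable_timeShift
  have hmap_int : ∀ t : ℝ, Integrable (fun γ => mk (timeShift t γ)) ν := by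
    intro t
    have h1 : Integrable mk (ν.map (timeShift t)) := by rw [hinv t]; exact hmk_int
    exact (integrable_map_measure hmkSM.aestronglyMeasurable (hshiftm t).aemeasurable).1 h1
  have hmap_eq : ∀ t : ℝ, ∫ γ, mk (timeShift t γ) ∂ν = ∫ γ, mk γ ∂ν := by
    intro t
    have h1 := integral_map (hshiftm t).aemeasurable
      (hmkSM.aestronglyMeasurable (μ := ν.map (timeShift t)))
    rw [hinv t] at h1
    exact h1.symm
  have hmap_norm_eq : ∀ t : ℝ, ∫ γ, ‖mk (timeShift t γ)‖ ∂ν = ∫ γ, ‖mk γ‖ ∂ν := by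
    intro t
    have h1 := integral_map (f := fun γ => ‖mk γ‖) (hshiftm t).aemeasurable
      (hmkSM.norm.aestronglyMeasurable (μ := ν.map (timeShift t)))
    rw [hinv t] at h1
    exact h1.symm
  have hGint : Integrable G (m.prod ν) := by
    rw [MeasureTheory.integrable_prod_iff hGm.aestronglyMeasurable]
    constructor
    · exact Eventually.of_forall fun t => hmap_int t
    · have he : (fun t => ∫ γ, ‖G (t, γ)‖ ∂ν) = fun _ => ∫ γ, ‖mk γ‖ ∂ν :=
        funext fun t => hmap_norm_eq t
      rw [he]
      exact integrable_const _
  have hc1 : ∫ p, G p ∂(m.prod ν) = ∫ γ, g γ ∂ν := by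
    rw [MeasureTheory.integral_prod _ hGint]
    have he : (fun t => ∫ γ, G (t, γ) ∂ν) = fun _ : ℝ => ∫ γ, mk γ ∂ν :=
      funext fun t => hmap_eq t
    rw [he, integral_const]
    have hmu : m Set.univ = 1 := by rw [hm, Measure.restrict_apply_univ]; simp
    rw [measureReal_def, hmu]
    simp [integral_congr_ae hgmk]
  have hswap : ∫ p, G p ∂(m.prod ν) = ∫ γ, (∫ t, mk (timeShift t γ) ∂m) ∂ν := by
    have h1 := MeasureTheory.integral_integral_swap
      (f := fun (t : ℝ) (γ : C(ℝ, EuclideanSpace ℝ (Fin n))) => mk (timeShift t γ))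
      (μ := m) (ν := ν) hGint
    rw [← h1, MeasureTheory.integral_prod _ hGint]
  -- the null set pulled back, jointly
  have hprod0 : (ν.prod m) {q : C(ℝ, EuclideanSpace ℝ (Fin n)) × ℝ |
      timeShift q.2 q.1 ∈ N} = 0 := by
    have hSm : MeasurableSet (Φ ⁻¹' N) := hΦm hNmeas
    have h1 : (m.prod ν) (Φ ⁻¹' N) = 0 := by
      rw [Measure.measure_prod_null hSm]
      refine Eventually.of_forall fun t => ?_
      show ν (Prod.mk t ⁻¹' (Φ ⁻¹' N)) = (0 : ENNReal)
      have he : Prod.mk t ⁻¹' (Φ ⁻¹' N) = timeShift t ⁻¹' N := rfl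
      rw [he, ← Measure.map_apply (hshiftm t) hNmeas, hinv t]
      exact hN0
    have h2 : {q : C(ℝ, EuclideanSpace ℝ (Fin n)) × ℝ | timeShift q.2 q.1 ∈ N}
        = Prod.swap ⁻¹' (Φ ⁻¹' N) := rfl
    rw [h2, ← Measure.prod_swap, Measure.map_apply measurable_swap (measurable_swap hSm)]
    have h3 : Prod.swap ⁻¹' (Prod.swap ⁻¹' (Φ ⁻¹' N))
        = (Φ ⁻¹' N : Set (ℝ × C(ℝ, EuclideanSpace ℝ (Fin n)))) := by
      ext q; simp
    rw [h3]
    exact h1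
  have hae2 : ∀ᵐ γ ∂ν, ∀ᵐ t ∂m, timeShift t γ ∉ N := by
    have h4 := Measure.ae_ae_of_ae_prod (μ := ν) (ν := m)
      (p := fun q : C(ℝ, EuclideanSpace ℝ (Fin n)) × ℝ => timeShift q.2 q.1 ∉ N)
      (by rw [ae_iff]; simpa using hprod0)
    exact h4
  have hinner : ∀ᵐ γ ∂ν, (∫ t, mk (timeShift t γ) ∂m) = φ (γ 1) - φ (γ 0) := by
    filter_upwards [hae2, hlip] with γ hγN hγL
    have h1 : ∀ᵐ t ∂m, mk (timeShift t γ) = g (timeShift t γ) := by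
      filter_upwards [hγN] with t ht
      by_contra hcon
      exact ht (hsubN (Ne.symm hcon))
    have h2 : ∀ t : ℝ, g (timeShift t γ)
        = (inner ℝ (gradient φ (γ t)) (deriv (⇑γ) t) : ℝ) := by
      intro t
      have e0 : (timeShift t γ) 0 = γ t := by rw [timeShift_apply]; norm_num
      have e1 : deriv (⇑(timeShift t γ)) 0 = deriv (⇑γ) t := by
        rw [deriv_timeShift]; norm_num
      rw [hg]
      simp only
      rw [e0, e1]
    calc ∫ t, mk (timeShift t γ) ∂m
        = ∫ t, (inner ℝ (gradient φ (γ t)) (deriv (⇑γ) t) : ℝ) ∂m := by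
          apply integral_congr_ae
          filter_upwards [h1] with t ht
          rw [ht, h2 t]
      _ = φ (γ 1) - φ (γ 0) := by
          rw [hm]
          exact slice_integral hφ γ hγL
  have hbd_int : Integrable (fun γ => φ (γ 1) - φ (γ 0)) ν := by
    have h1 : Integrable (fun γ => ∫ t, G (t, γ) ∂m) ν := hGint.integral_prod_right
    exact h1.congr hinner
  have hu : Measurable (fun γ : C(ℝ, EuclideanSpace ℝ (Fin n)) => φ (γ 0)) :=
    (hφ.continuous.comp (continuous_eval_const 0)).measurable
  have hTeq : (fun γ : C(ℝ, EuclideanSpace ℝ (Fin n)) =>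
      φ ((timeShift 1 γ) 0) - φ (γ 0)) = fun γ => φ (γ 1) - φ (γ 0) := by
    funext γ
    rw [timeShift_apply]
    norm_num
  have hzero : ∫ γ, (φ (γ 1) - φ (γ 0)) ∂ν = 0 := by
    rw [← hTeq]
    exact integral_cobound ν (timeShift 1) (hshiftm 1) (hinv 1) hu
      (by rw [hTeq]; exact hbd_int)
  show (∫ γ, g γ ∂ν) = 0
  calc ∫ γ, g γ ∂ν = ∫ p, G p ∂(m.prod ν) := hc1.symm
    _ = ∫ γ, (∫ t, mk (timeShift t γ) ∂m) ∂ν := hswap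
    _ = ∫ γ, (φ (γ 1) - φ (γ 0)) ∂ν := integral_congr_ae hinner
    _ = 0 := hzero
end

section
/- Let T_i → T > 0 and let γ_i : [0, T_i] → ℝⁿ be Lipschitz curves with a uniform Lipschitz constant, converging uniformly on [0, min(T_i, T)] to a Lipschitz curve γ : [0,T] → ℝⁿ. Suppose ∫_0^{T_i} dist((γ_i(t), γ_i'(t)), G) dt → 0, where G = {(x,v) : −v ∈ ∂ᶜf(x)} is the graph of −∂ᶜf for a locally Lipschitz f (a closed set, with ∂ᶜf(x) convex for each x). Then −γ'(t) ∈ ∂ᶜf(γ(t)) for almost every t ∈ [0,T]. -/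
open MeasureTheory Filter

/-!
Fix `t` at which `γ` has derivative `d`, and `ρ > 0`; let `V` be the convex hull of the sets
`-∂ᶜf(y)` for `y` within `ρ` of `γ t`. For `b > t` close to `t` and `i` large, `γᵢ` stays near
`γ t` on `[t, b]`, so every point of `G` close to `(γᵢ s, γᵢ' s)` has its second coordinate in
`V`, whence `dist(γᵢ' s, V) ≤ C · dist((γᵢ s, γᵢ' s), G)`. The difference quotient of `γᵢ` on
`[t, b]` is the average of `γᵢ'` (fundamental theorem of calculus for Lipschitz curves), and
`dist(·, V)` is convex, so by Jensen its distance to `V` is at most `C / (b - t)` times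
`∫ dist((γᵢ, γᵢ'), G) → 0`. Letting `i → ∞` and then `b → t` gives `d ∈ closure V`. The limiting
gradients of `f` form a closed, locally bounded graph, so `∂ᶜf` is upper semicontinuous with
closed convex values, and letting `ρ → 0` gives `-d ∈ ∂ᶜf(γ t)`.
-/

open Metric Set Topology
open scoped Pointwise

theorem LocallyLipschitz.frequently_differentiableAt {E F : Type*} [NormedAddCommGroup E]
    [NormedSpace ℝ E] [FiniteDimensional ℝ E] [NormedAddCommGroup F] [NormedSpace ℝ F]
    [FiniteDimensional ℝ F] {f : E → F} (hf : LocallyLipschitz f) (x : E) :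
    ∃ᶠ y in 𝓝 x, DifferentiableAt ℝ f y := by
  borelize E
  obtain ⟨K, t, ht, hK⟩ := hf x
  obtain ⟨U, hUt, hU, hxU⟩ := _root_.mem_nhds_iff.1 ht
  have hdense : Dense {y | y ∈ U → DifferentiableAt ℝ f y} := by
    refine Measure.dense_of_ae (μ := Measure.addHaar) ?_
    filter_upwards [(hK.mono hUt).ae_differentiableWithinAt_of_mem] with y hy hyU
    exact (hy hyU).differentiableAt (hU.mem_nhds hyU)
  rw [frequently_iff]
  intro W hW
  obtain ⟨V, hVW, hV, hxV⟩ := _root_.mem_nhds_iff.1 hW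
  obtain ⟨y, ⟨hyV, hyU⟩, hy⟩ := hdense.inter_open_nonempty _ (hV.inter hU) ⟨x, hxV, hxU⟩
  exact ⟨y, hVW hyV, hy hyU⟩

section GradientLimits

variable {E : Type*} [NormedAddCommGroup E] [InnerProductSpace ℝ E] [CompleteSpace E]

def gradientLimits (f : E → ℝ) (x : E) : Set E :=
  {v | ∃ y : ℕ → E, (∀ k, DifferentiableAt ℝ f (y k)) ∧
    Tendsto y atTop (𝓝 x) ∧ Tendsto (fun k => gradient f (y k)) atTop (𝓝 v)}

def gradientGraph (f : E → ℝ) : Set (E × E) :=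
  {p | DifferentiableAt ℝ f p.1 ∧ gradient f p.1 = p.2}

variable {f : E → ℝ}

theorem mem_gradientLimits_iff {x v : E} :
    v ∈ gradientLimits f x ↔ (x, v) ∈ closure (gradientGraph f) := by
  rw [mem_closure_iff_seq_limit]
  constructor
  · rintro ⟨y, hy, hyx, hv⟩
    exact ⟨fun k => (y k, gradient f (y k)), fun k => ⟨hy k, rfl⟩, hyx.prodMk_nhds hv⟩
  · rintro ⟨p, hp, hlim⟩
    refine ⟨fun k => (p k).1, fun k => (hp k).1, (continuous_fst.tendsto _).comp hlim, ?_⟩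
    simp only [(hp _).2]
    exact (continuous_snd.tendsto _).comp hlim

theorem mem_gradientLimits_of_tendsto {y v : ℕ → E} {x w : E}
    (hy : Tendsto y atTop (𝓝 x)) (hv : Tendsto v atTop (𝓝 w))
    (hmem : ∀ k, v k ∈ gradientLimits f (y k)) : w ∈ gradientLimits f x := by
  simp only [mem_gradientLimits_iff] at hmem ⊢
  exact isClosed_closure.mem_of_tendsto (hy.prodMk_nhds hv) (Eventually.of_forall hmem)

theorem norm_gradient_le_of_lipschitzOn {s : Set E} {y : E} (hs : s ∈ 𝓝 y) {L : NNReal}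
    (hL : LipschitzOnWith L f s) : ‖gradient f y‖ ≤ L := by
  rw [gradient, LinearIsometryEquiv.norm_map]
  exact norm_fderiv_le_of_lipschitzOn ℝ hs hL

theorem norm_le_of_mem_gradientLimits {s : Set E} (hs : IsOpen s) {x v : E} (hx : x ∈ s)
    {L : NNReal} (hL : LipschitzOnWith L f s) (hv : v ∈ gradientLimits f x) : ‖v‖ ≤ L := by
  obtain ⟨y, -, hyx, hgrad⟩ := hv
  refine le_of_tendsto hgrad.norm ?_
  filter_upwards [hyx.eventually (hs.mem_nhds hx)] with k hk
  exact norm_gradient_le_of_lipschitzOn (hs.mem_nhds hk) hL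

variable [FiniteDimensional ℝ E]

theorem gradientLimits_nonempty (hf : LocallyLipschitz f) (x : E) :
    (gradientLimits f x).Nonempty := by
  obtain ⟨y, hyx, hy⟩ := exists_seq_forall_of_frequently (hf.frequently_differentiableAt x)
  obtain ⟨K, U, hU, hK⟩ := hf x
  have hbdd : ∃ᶠ k in atTop, gradient f (y k) ∈ closedBall (0 : E) K := by
    refine (hyx.eventually (interior_mem_nhds.2 hU)).frequently.mono fun k hk => ?_
    rw [mem_closedBall_zero_iff]
    exact norm_gradient_le_of_lipschitzOn (mem_interior_iff_mem_nhds.1 hk) hK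
  obtain ⟨v, -, φ, hφ, hv⟩ := tendsto_subseq_of_frequently_bounded isBounded_closedBall hbdd
  exact ⟨v, y ∘ φ, fun k => hy (φ k), hyx.comp hφ.tendsto_atTop, hv⟩

theorem eventually_gradientLimits_subset_cthickening (hf : LocallyLipschitz f) (x : E)
    {ε : ℝ} (hε : 0 < ε) :
    ∀ᶠ y in 𝓝 x, gradientLimits f y ⊆ cthickening ε (gradientLimits f x) := by
  by_contra h
  obtain ⟨y, hyx, hy⟩ := exists_seq_forall_of_frequently (not_eventually.1 h)
  choose v hv hvε using fun k => not_subset.1 (hy k)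
  obtain ⟨K, U, hU, hK⟩ := hf x
  have hbdd : ∃ᶠ k in atTop, v k ∈ closedBall (0 : E) K := by
    refine (hyx.eventually (interior_mem_nhds.2 hU)).frequently.mono fun k hk => ?_
    rw [mem_closedBall_zero_iff]
    exact norm_le_of_mem_gradientLimits isOpen_interior hk (hK.mono interior_subset) (hv k)
  obtain ⟨w, -, φ, hφ, hvw⟩ := tendsto_subseq_of_frequently_bounded isBounded_closedBall hbdd
  have hw : w ∈ gradientLimits f x :=
    mem_gradientLimits_of_tendsto (hyx.comp hφ.tendsto_atTop) hvw fun k => hv (φ k)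
  obtain ⟨k, hk⟩ := (hvw.eventually (ball_mem_nhds w hε)).exists
  exact hvε (φ k) (mem_cthickening_of_dist_le _ w ε _ hw (mem_ball.1 hk).le)

end GradientLimits

section Clarke

variable {n : ℕ} {f : EuclideanSpace ℝ (Fin n) → ℝ}

theorem gradientLimits_subset_clarkeSubdiff (f : EuclideanSpace ℝ (Fin n) → ℝ)
    (x : EuclideanSpace ℝ (Fin n)) : gradientLimits f x ⊆ clarkeSubdiff f x :=
  (subset_convexHull ℝ _).trans subset_closure

theorem clarkeSubdiff_nonempty (hf : LocallyLipschitz f) (x : EuclideanSpace ℝ (Fin n)) :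
    (clarkeSubdiff f x).Nonempty :=
  (gradientLimits_nonempty hf x).mono (gradientLimits_subset_clarkeSubdiff f x)

theorem isClosed_clarkeSubdiff (f : EuclideanSpace ℝ (Fin n) → ℝ)
    (x : EuclideanSpace ℝ (Fin n)) : IsClosed (clarkeSubdiff f x) :=
  isClosed_closure

theorem convex_clarkeSubdiff (f : EuclideanSpace ℝ (Fin n) → ℝ)
    (x : EuclideanSpace ℝ (Fin n)) : Convex ℝ (clarkeSubdiff f x) :=
  (convex_convexHull ℝ _).closure

theorem eventually_clarkeSubdiff_subset_cthickening (hf : LocallyLipschitz f)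
    (x : EuclideanSpace ℝ (Fin n)) {ε : ℝ} (hε : 0 < ε) :
    ∀ᶠ y in 𝓝 x, clarkeSubdiff f y ⊆ cthickening ε (clarkeSubdiff f x) := by
  filter_upwards [eventually_gradientLimits_subset_cthickening hf x hε] with y hy
  refine closure_minimal (convexHull_min ?_ ((convex_clarkeSubdiff f x).cthickening ε))
    isClosed_cthickening
  exact hy.trans (cthickening_subset_of_subset ε (gradientLimits_subset_clarkeSubdiff f x))

end Clarke

theorem neg_subset_cthickening_neg {E : Type*} [SeminormedAddCommGroup E] {s t : Set E}
    {ε : ℝ} (h : s ⊆ cthickening ε t) : -s ⊆ cthickening ε (-t) := fun v hv => by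
  rw [mem_cthickening_iff, ← infEDist_neg, ← mem_cthickening_iff]
  exact h hv

theorem mem_of_forall_mem_closure_convexHull {E : Type*} [SeminormedAddCommGroup E]
    [NormedSpace ℝ E] {F : E → Set E} {x d : E}
    (hconv : Convex ℝ (F x)) (hclosed : IsClosed (F x))
    (husc : ∀ ε > 0, ∀ᶠ y in 𝓝 x, F y ⊆ cthickening ε (F x))
    (hd : ∀ ρ > 0, d ∈ closure (convexHull ℝ (⋃ y ∈ ball x ρ, F y))) : d ∈ F x := by
  rw [← hclosed.closure_eq, closure_eq_iInter_cthickening]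
  refine mem_iInter₂.2 fun ε hε => ?_
  obtain ⟨ρ, hρ, hball⟩ := eventually_nhds_iff_ball.1 (husc ε hε)
  exact closure_minimal (convexHull_min (iUnion₂_subset hball) (hconv.cthickening ε))
    isClosed_cthickening (hd ρ hρ)

theorem Convex.convexOn_infDist {E : Type*} [SeminormedAddCommGroup E] [NormedSpace ℝ E]
    {V : Set E} (hV : Convex ℝ V) : ConvexOn ℝ univ (infDist · V) := by
  refine ⟨convex_univ, fun x _ y _ a b ha hb hab => ?_⟩
  rcases V.eq_empty_or_nonempty with rfl | hne
  · simp
  refine le_of_forall_pos_le_add fun ε hε => ?_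
  obtain ⟨p, hp, hxp⟩ := (infDist_lt_iff hne).1 (lt_add_of_pos_right (infDist x V) hε)
  obtain ⟨q, hq, hyq⟩ := (infDist_lt_iff hne).1 (lt_add_of_pos_right (infDist y V) hε)
  calc infDist (a • x + b • y) V ≤ dist (a • x + b • y) (a • p + b • q) :=
        infDist_le_dist_of_mem (hV hp hq ha hb hab)
    _ ≤ a * dist x p + b * dist y q := by
        refine (dist_add_add_le _ _ _ _).trans_eq ?_
        rw [dist_smul₀, dist_smul₀, Real.norm_of_nonneg ha, Real.norm_of_nonneg hb]
    _ ≤ a * (infDist x V + ε) + b * (infDist y V + ε) := by gcongr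
    _ = a • infDist x V + b • infDist y V + ε := by
        rw [smul_eq_mul, smul_eq_mul]; linear_combination ε * hab

theorem MeasureTheory.Integrable.infDist {α E : Type*} [MeasurableSpace α] {μ : Measure α}
    [IsFiniteMeasure μ] [NormedAddCommGroup E] {u : α → E} (hu : Integrable u μ)
    (V : Set E) : Integrable (fun s => Metric.infDist (u s) V) μ := by
  refine Integrable.mono' (hu.norm.add (integrable_const (Metric.infDist 0 V)))
    ((continuous_infDist_pt V).comp_aestronglyMeasurable hu.1) (Eventually.of_forall fun s => ?_)
  rw [Real.norm_of_nonneg infDist_nonneg, Pi.add_apply, add_comm, ← dist_zero_right]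
  exact infDist_le_infDist_add_dist

theorem infDist_snd_le_mul_infDist {X Y : Type*} [PseudoMetricSpace X] [PseudoMetricSpace Y]
    {G : Set (X × Y)} (hG : G.Nonempty) {V : Set Y} {x : X × Y} {r M : ℝ} (hr : 0 < r)
    (hGV : ∀ p ∈ G, dist x p < r → p.2 ∈ V) (hM : infDist x.2 V ≤ M) :
    infDist x.2 V ≤ (1 + M / r) * infDist x G := by
  have hMr : 0 ≤ M / r := div_nonneg (infDist_nonneg.trans hM) hr.le
  have hxG : 0 ≤ infDist x G := infDist_nonneg
  rcases lt_or_ge (infDist x G) r with hlt | hge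
  · have : infDist x.2 V ≤ infDist x G := by
      refine le_of_forall_pos_lt_add fun ε hε => ?_
      obtain ⟨p, hp, hxp⟩ := (infDist_lt_iff hG).1 (lt_min hlt (lt_add_of_pos_right _ hε))
      calc infDist x.2 V ≤ dist x.2 p.2 :=
            infDist_le_dist_of_mem (hGV p hp (hxp.trans_le (min_le_left _ _)))
        _ ≤ dist x p := by rw [Prod.dist_eq]; exact le_max_right _ _
        _ < infDist x G + ε := hxp.trans_le (min_le_right _ _)
    nlinarith
  · calc infDist x.2 V ≤ M / r * r := by rwa [div_mul_cancel₀ _ hr.ne']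
      _ ≤ (1 + M / r) * infDist x G := by nlinarith

section Curves

variable {E : Type*} [NormedAddCommGroup E] [NormedSpace ℝ E] {g g' : ℝ → E} {K : NNReal}
  {a b : ℝ}

theorem LipschitzOnWith.norm_le_of_hasDerivAt (hg : LipschitzOnWith K g (Icc a b)) {s : ℝ}
    (hs : s ∈ Ioo a b) {v : E} (hv : HasDerivAt g v s) : ‖v‖ ≤ K :=
  hv.deriv ▸ norm_deriv_le_of_lipschitzOn (Icc_mem_nhds hs.1 hs.2) hg

variable [CompleteSpace E]

theorem LipschitzOnWith.intervalIntegrable_of_ae_hasDerivAt (hab : a ≤ b)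
    (hg : LipschitzOnWith K g (Icc a b)) (hg' : ∀ᵐ s, s ∈ Icc a b → HasDerivAt g (g' s) s) :
    IntervalIntegrable g' volume a b := by
  rw [intervalIntegrable_iff_integrableOn_Ioo_of_le hab]
  have hderiv : ∀ᵐ s ∂volume.restrict (Ioo a b), HasDerivAt g (g' s) s := by
    rw [ae_restrict_iff' measurableSet_Ioo]
    filter_upwards [hg'] with s hs hsI using hs (Ioo_subset_Icc_self hsI)
  refine Integrable.mono' (integrable_const (K : ℝ))
    ((aestronglyMeasurable_deriv g _).congr (hderiv.mono fun s hs => hs.deriv)) ?_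
  rw [ae_restrict_iff' measurableSet_Ioo]
  filter_upwards [hg'] with s hs hsI
  exact hg.norm_le_of_hasDerivAt hsI (hs (Ioo_subset_Icc_self hsI))

theorem LipschitzOnWith.integral_eq_sub_of_ae_hasDerivAt (hab : a ≤ b)
    (hg : LipschitzOnWith K g (Icc a b)) (hg' : ∀ᵐ s, s ∈ Icc a b → HasDerivAt g (g' s) s) :
    ∫ s in a..b, g' s = g b - g a := by
  refine (SeparatingDual.eq_iff_forall_dual_eq (R := ℝ)).2 fun ℓ => ?_
  have hℓg : AbsolutelyContinuousOnInterval (ℓ ∘ g) a b := by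
    refine LipschitzOnWith.absolutelyContinuousOnInterval (K := ‖ℓ‖₊ * K) ?_
    rw [uIcc_of_le hab]
    exact ℓ.lipschitz.comp_lipschitzOnWith hg
  have hFTC := hℓg.integral_deriv_eq_sub
  rw [Function.comp_apply, Function.comp_apply] at hFTC
  rw [← ℓ.intervalIntegral_comp_comm (hg.intervalIntegrable_of_ae_hasDerivAt hab hg'), map_sub,
    ← hFTC]
  refine intervalIntegral.integral_congr_ae ?_
  rw [uIoc_of_le hab]
  filter_upwards [hg'] with s hs hsI
  exact ((ℓ.hasFDerivAt.comp_hasDerivAt s (hs (Ioc_subset_Icc_self hsI))).deriv).symm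

theorem LipschitzOnWith.infDist_slope_le (hab : a < b) (hg : LipschitzOnWith K g (Icc a b))
    (hg' : ∀ᵐ s, s ∈ Icc a b → HasDerivAt g (g' s) s) {V : Set E} (hV : Convex ℝ V) :
    infDist (slope g a b) V ≤ (b - a)⁻¹ * ∫ s in a..b, infDist (g' s) V := by
  have hint := (hg.intervalIntegrable_of_ae_hasDerivAt hab.le hg').1
  have hjensen := hV.convexOn_infDist.map_set_average_le (continuous_infDist_pt V).continuousOn
    isClosed_univ (by simp [hab]) measure_Ioc_lt_top.ne (ae_of_all _ fun _ => mem_univ _) hint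
    (hint.infDist V)
  rw [setAverage_eq, setAverage_eq, Real.volume_real_Ioc_of_le hab.le, smul_eq_mul,
    ← intervalIntegral.integral_of_le hab.le, ← intervalIntegral.integral_of_le hab.le,
    hg.integral_eq_sub_of_ae_hasDerivAt hab.le hg'] at hjensen
  simpa only [slope_def_module] using hjensen

theorem LipschitzOnWith.intervalIntegrable_infDist_prodMk (hab : a ≤ b)
    (hg : LipschitzOnWith K g (Icc a b)) (hg' : ∀ᵐ s, s ∈ Icc a b → HasDerivAt g (g' s) s)
    (G : Set (E × E)) : IntervalIntegrable (fun s => infDist (g s, g' s) G) volume a b :=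
  (intervalIntegrable_iff_integrableOn_Ioc_of_le hab).2 <|
    ((hg.continuousOn.intervalIntegrable_of_Icc hab).1.prodMk
      (hg.intervalIntegrable_of_ae_hasDerivAt hab hg').1).infDist G

end Curves

section Limit

variable {E : Type*} [NormedAddCommGroup E] [NormedSpace ℝ E] [CompleteSpace E]
  {K : NNReal} {γ : ℝ → E} {γi γi' : ℕ → ℝ → E} {T : ℝ} {Ti : ℕ → ℝ}

theorem slope_mem_closure_of_tendsto_integral_infDist {G : Set (E × E)} (hG : G.Nonempty)
    {V : Set E} (hV : Convex ℝ V) (hVne : V.Nonempty) {x : E} {r : ℝ} (hr : 0 < r)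
    (hGV : ∀ p ∈ G, dist p.1 x < r → p.2 ∈ V) {a b : ℝ} (hab : a < b)
    (hγi : ∀ᶠ i in atTop, LipschitzOnWith K (γi i) (Icc a b))
    (hγi' : ∀ᶠ i in atTop, ∀ᵐ s, s ∈ Icc a b → HasDerivAt (γi i) (γi' i s) s)
    (hnear : ∀ᶠ i in atTop, ∀ s ∈ Icc a b, dist (γi i s) x < r / 2)
    (ha : Tendsto (γi · a) atTop (𝓝 (γ a))) (hb : Tendsto (γi · b) atTop (𝓝 (γ b)))
    (hint : Tendsto (fun i => ∫ s in a..b, infDist (γi i s, γi' i s) G) atTop (𝓝 0)) :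
    slope γ a b ∈ closure V := by
  obtain ⟨v₀, hv₀⟩ := hVne
  set c := 1 + (K + ‖v₀‖) / (r / 2)
  have hbound : ∀ᶠ i in atTop, infDist (slope (γi i) a b) V ≤
      (b - a)⁻¹ * (c * ∫ s in a..b, infDist (γi i s, γi' i s) G) := by
    filter_upwards [hγi, hγi', hnear] with i hlip hderiv hclose
    refine (hlip.infDist_slope_le hab hderiv hV).trans ?_
    gcongr
    rw [← intervalIntegral.integral_const_mul]
    refine intervalIntegral.integral_mono_ae_restrict hab.le
      (hlip.intervalIntegrable_of_ae_hasDerivAt hab.le hderiv |>.1.infDist V |>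
        (intervalIntegrable_iff_integrableOn_Ioc_of_le hab.le).2)
      ((hlip.intervalIntegrable_infDist_prodMk hab.le hderiv G).const_mul c) ?_
    rw [EventuallyLE, ← Measure.restrict_congr_set Ioo_ae_eq_Icc,
      ae_restrict_iff' measurableSet_Ioo]
    filter_upwards [hderiv] with s hs hsI
    have hd := hs (Ioo_subset_Icc_self hsI)
    refine infDist_snd_le_mul_infDist (x := (γi i s, γi' i s)) hG (half_pos hr)
      (fun p hp hsp => hGV p hp ?_) ?_
    · calc dist p.1 x ≤ dist (γi i s) p.1 + dist (γi i s) x := dist_triangle_left _ _ _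
        _ < r / 2 + r / 2 := by
          refine add_lt_add (lt_of_le_of_lt ?_ hsp) (hclose s (Ioo_subset_Icc_self hsI))
          rw [Prod.dist_eq]
          exact le_max_left _ _
        _ = r := add_halves r
    · calc infDist (γi' i s) V ≤ ‖γi' i s‖ + ‖v₀‖ :=
          (infDist_le_dist_of_mem hv₀).trans (dist_le_norm_add_norm _ _)
        _ ≤ K + ‖v₀‖ := by grw [hlip.norm_le_of_hasDerivAt hsI hd]
  have hslope : Tendsto (fun i => infDist (slope (γi i) a b) V) atTop
      (𝓝 (infDist (slope γ a b) V)) := by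
    simp only [slope_def_module]
    exact ((continuous_infDist_pt V).tendsto _).comp ((hb.sub ha).const_smul _)
  have hle : infDist (slope γ a b) V ≤ 0 :=
    le_of_tendsto_of_tendsto hslope (by simpa using (hint.const_mul c).const_mul (b - a)⁻¹) hbound
  exact (mem_closure_iff_infDist_zero ⟨v₀, hv₀⟩).2 (le_antisymm hle infDist_nonneg)

theorem slope_mem_closure_convexHull_of_tendsto_integral_infDist {F : E → Set E}
    (hTconv : Tendsto Ti atTop (𝓝 T))
    (hγi : ∀ i, LipschitzOnWith K (γi i) (Icc 0 (Ti i)))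
    (hγi' : ∀ i, ∀ᵐ s, s ∈ Icc 0 (Ti i) → HasDerivAt (γi i) (γi' i s) s)
    (hγ : LipschitzOnWith K γ (Icc 0 T))
    (hunif : ∀ τ < T, TendstoUniformlyOn γi γ atTop (Icc 0 τ))
    (hdist : Tendsto (fun i => ∫ s in (0 : ℝ)..(Ti i),
      infDist (γi i s, γi' i s) {p : E × E | p.2 ∈ F p.1}) atTop (𝓝 0))
    {t b ρ : ℝ} (ht : 0 < t) (htb : t < b) (hbT : b < T) (hKb : K * (b - t) < ρ / 4)
    (hne : (F (γ t)).Nonempty) :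
    slope γ t b ∈ closure (convexHull ℝ (⋃ y ∈ ball (γ t) ρ, F y)) := by
  have hρ : 0 < ρ := by nlinarith [mul_nonneg K.coe_nonneg (sub_nonneg.2 htb.le)]
  have hsub : ∀ᶠ i in atTop, b < Ti i := hTconv.eventually (lt_mem_nhds hbT)
  have hIcc : ∀ᶠ i in atTop, Icc t b ⊆ Icc 0 (Ti i) :=
    hsub.mono fun i hi => Icc_subset_Icc ht.le hi.le
  have hU := hunif b hbT
  refine slope_mem_closure_of_tendsto_integral_infDist (G := {p : E × E | p.2 ∈ F p.1})
    (let ⟨v, hv⟩ := hne; ⟨(γ t, v), hv⟩) (convex_convexHull ℝ _)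
    (hne.mono ((subset_biUnion_of_mem (mem_ball_self hρ)).trans (subset_convexHull ℝ _))) hρ
    (fun p hp hpx => subset_convexHull ℝ _ (mem_biUnion (mem_ball.2 hpx) hp)) htb
    (hIcc.mono fun i hi => (hγi i).mono hi)
    (hIcc.mono fun i hi => (hγi' i).mono fun s hs hsI => hs (hi hsI)) ?_
    (hU.tendsto_at ⟨ht.le, htb.le⟩) (hU.tendsto_at ⟨ht.le.trans htb.le, le_rfl⟩) ?_
  · filter_upwards [tendstoUniformlyOn_iff.1 hU (ρ / 4) (by positivity)] with i hi s hs
    have hγst : dist (γ s) (γ t) ≤ ρ / 4 := by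
      refine (hγ.dist_le_mul s ⟨by linarith [hs.1], by linarith [hs.2]⟩ t
        ⟨ht.le, by linarith⟩).trans ?_
      rw [Real.dist_eq, abs_of_nonneg (by linarith [hs.1])]
      nlinarith [hs.2, K.coe_nonneg]
    calc dist (γi i s) (γ t) ≤ dist (γ s) (γi i s) + dist (γ s) (γ t) := dist_triangle_left _ _ _
      _ < ρ / 4 + ρ / 4 := by
          linarith [hi s ⟨by linarith [hs.1], hs.2⟩]
      _ = ρ / 2 := by ring
  · refine squeeze_zero' (Eventually.of_forall fun i =>
      intervalIntegral.integral_nonneg htb.le fun _ _ => infDist_nonneg) ?_ hdist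
    filter_upwards [hsub] with i hi
    exact intervalIntegral.integral_mono_interval ht.le htb.le hi.le
      (Eventually.of_forall fun _ => infDist_nonneg)
      ((hγi i).intervalIntegrable_infDist_prodMk (ht.trans (htb.trans hi)).le (hγi' i) _)

theorem mem_of_hasDerivAt_of_tendsto_integral_infDist {F : E → Set E}
    (hTconv : Tendsto Ti atTop (𝓝 T))
    (hγi : ∀ i, LipschitzOnWith K (γi i) (Icc 0 (Ti i)))
    (hγi' : ∀ i, ∀ᵐ s, s ∈ Icc 0 (Ti i) → HasDerivAt (γi i) (γi' i s) s)
    (hγ : LipschitzOnWith K γ (Icc 0 T))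
    (hunif : ∀ τ < T, TendstoUniformlyOn γi γ atTop (Icc 0 τ))
    (hdist : Tendsto (fun i => ∫ s in (0 : ℝ)..(Ti i),
      infDist (γi i s, γi' i s) {p : E × E | p.2 ∈ F p.1}) atTop (𝓝 0))
    {t : ℝ} (ht : t ∈ Ioo 0 T) {d : E} (hd : HasDerivAt γ d t)
    (hne : (F (γ t)).Nonempty) (hconv : Convex ℝ (F (γ t))) (hclosed : IsClosed (F (γ t)))
    (husc : ∀ ε > 0, ∀ᶠ y in 𝓝 (γ t), F y ⊆ cthickening ε (F (γ t))) : d ∈ F (γ t) := by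
  refine mem_of_forall_mem_closure_convexHull hconv hclosed husc fun ρ hρ => ?_
  have hsmall : Tendsto (fun b => (K : ℝ) * (b - t)) (𝓝 t) (𝓝 0) :=
    (by fun_prop : Continuous fun b : ℝ => (K : ℝ) * (b - t)).tendsto' t 0 (by simp)
  have hnbhd : ∀ᶠ b in 𝓝 t, b < T ∧ K * (b - t) < ρ / 4 :=
    (gt_mem_nhds ht.2).and (hsmall.eventually (gt_mem_nhds (by positivity)))
  have hev : ∀ᶠ b in 𝓝[>] t, t < b ∧ b < T ∧ K * (b - t) < ρ / 4 :=
    eventually_mem_nhdsWithin.and (hnbhd.filter_mono nhdsWithin_le_nhds)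
  refine isClosed_closure.mem_of_tendsto
    ((hasDerivAt_iff_tendsto_slope.1 hd).mono_left (nhdsGT_le_nhdsNE t)) ?_
  filter_upwards [hev] with b ⟨htb, hbT, hKb⟩
  exact slope_mem_closure_convexHull_of_tendsto_integral_infDist hTconv hγi hγi' hγ hunif hdist
    ht.1 htb hbT hKb hne

theorem ae_exists_hasDerivAt_mem_of_tendsto_integral_infDist [FiniteDimensional ℝ E]
    {F : E → Set E} (hne : ∀ x, (F x).Nonempty) (hconv : ∀ x, Convex ℝ (F x))
    (hclosed : ∀ x, IsClosed (F x))
    (husc : ∀ x, ∀ ε > 0, ∀ᶠ y in 𝓝 x, F y ⊆ cthickening ε (F x))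
    (hTconv : Tendsto Ti atTop (𝓝 T))
    (hγi : ∀ i, LipschitzOnWith K (γi i) (Icc 0 (Ti i)))
    (hγi' : ∀ i, ∀ᵐ s, s ∈ Icc 0 (Ti i) → HasDerivAt (γi i) (γi' i s) s)
    (hγ : LipschitzOnWith K γ (Icc 0 T))
    (hunif : ∀ τ < T, TendstoUniformlyOn γi γ atTop (Icc 0 τ))
    (hdist : Tendsto (fun i => ∫ s in (0 : ℝ)..(Ti i),
      infDist (γi i s, γi' i s) {p : E × E | p.2 ∈ F p.1}) atTop (𝓝 0)) :
    ∀ᵐ t, t ∈ Icc 0 T → ∃ d, HasDerivAt γ d t ∧ d ∈ F (γ t) := by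
  filter_upwards [(hγ.mono Ioo_subset_Icc_self).ae_differentiableWithinAt_of_mem_real,
    (Ioo_ae_eq_Icc (μ := volume) (a := 0) (b := T)).mem_iff] with t hdiff hIoo htI
  have ht : t ∈ Ioo 0 T := hIoo.2 htI
  have hd := ((hdiff ht).differentiableAt (isOpen_Ioo.mem_nhds ht)).hasDerivAt
  exact ⟨_, hd, mem_of_hasDerivAt_of_tendsto_integral_infDist hTconv hγi hγi' hγ hunif hdist
    ht hd (hne _) (hconv _) (hclosed _) (husc _)⟩

end Limit

theorem tendstoUniformlyOn_Icc_of_tendsto_iSup_norm_sub {E : Type*} [NormedAddCommGroup E]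
    {T : ℝ} {Ti : ℕ → ℝ} (hTconv : Tendsto Ti atTop (𝓝 T)) {γ : ℝ → E} {γi : ℕ → ℝ → E}
    (hγi : ∀ i, ContinuousOn (γi i) (Icc 0 (Ti i))) (hγ : ContinuousOn γ (Icc 0 T))
    (hconv : Tendsto (fun i => ⨆ t : Icc 0 (min (Ti i) T), ‖γ t - γi i t‖) atTop (𝓝 0))
    {τ : ℝ} (hτ : τ < T) : TendstoUniformlyOn γi γ atTop (Icc 0 τ) := by
  rw [tendstoUniformlyOn_iff]
  intro ε hε
  filter_upwards [hconv.eventually (gt_mem_nhds hε), hTconv.eventually (lt_mem_nhds hτ)]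
    with i hi hτi s hs
  have hbdd := isCompact_Icc.bddAbove_image
    ((hγ.mono (Icc_subset_Icc_right (min_le_right (Ti i) T))).sub
      ((hγi i).mono (Icc_subset_Icc_right (min_le_left (Ti i) T)))).norm
  rw [image_eq_range] at hbdd
  rw [dist_eq_norm]
  exact (le_ciSup hbdd ⟨s, hs.1, le_min (hs.2.trans hτi.le) (hs.2.trans hτ.le)⟩).trans_lt hi

theorem stmt16_general {n : ℕ} (f : EuclideanSpace ℝ (Fin n) → ℝ)
    (hf : LocallyLipschitz f)
    (T : ℝ) (Ti : ℕ → ℝ)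
    (hTconv : Tendsto Ti atTop (nhds T))
    (K : NNReal)
    (γi : ℕ → ℝ → EuclideanSpace ℝ (Fin n))
    (hγi : ∀ i, LipschitzOnWith K (γi i) (Set.Icc 0 (Ti i)))
    (γ : ℝ → EuclideanSpace ℝ (Fin n)) (hγ : LipschitzOnWith K γ (Set.Icc 0 T))
    (hconv : Tendsto (fun i => ⨆ t : Set.Icc 0 (min (Ti i) T), ‖γ t - γi i t‖)
      atTop (nhds 0))
    (γi' : ℕ → ℝ → EuclideanSpace ℝ (Fin n))
    (hγi' : ∀ i, ∀ᵐ t : ℝ, t ∈ Set.Icc 0 (Ti i) → HasDerivAt (γi i) (γi' i t) t)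
    (hdist : Tendsto (fun i => ∫ t in (0:ℝ)..(Ti i),
        Metric.infDist (γi i t, γi' i t)
          {p : EuclideanSpace ℝ (Fin n) × EuclideanSpace ℝ (Fin n) |
            -p.2 ∈ clarkeSubdiff f p.1}) atTop (nhds 0)) :
    ∀ᵐ t : ℝ, t ∈ Set.Icc 0 T →
      ∃ d, HasDerivAt γ d t ∧ -d ∈ clarkeSubdiff f (γ t) := by
  have hunif : ∀ τ < T, TendstoUniformlyOn γi γ atTop (Icc 0 τ) := fun τ hτ =>
    tendstoUniformlyOn_Icc_of_tendsto_iSup_norm_sub hTconv (fun i => (hγi i).continuousOn)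
      hγ.continuousOn hconv hτ
  exact ae_exists_hasDerivAt_mem_of_tendsto_integral_infDist (F := fun x => -clarkeSubdiff f x)
    (fun x => (clarkeSubdiff_nonempty hf x).neg) (fun x => (convex_clarkeSubdiff f x).neg)
    (fun x => (isClosed_clarkeSubdiff f x).neg)
    (fun x ε hε => (eventually_clarkeSubdiff_subset_cthickening hf x hε).mono
      fun _ => neg_subset_cthickening_neg)
    hTconv hγi hγi' hγ hunif hdist

/-- (Lemma 5.1.) Let `T_i → T > 0`, and let `γ_i : [0,T_i] → ℝⁿ` be
Lipschitz curves with a uniform Lipschitz constant converging uniformly on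
`[0, min(T_i,T)]` to a Lipschitz curve `γ`. If
`∫_0^{T_i} dist((γ_i(t), γ_i′(t)), G) dt → 0` where `G = graph(−∂ᶜf)` for a locally
Lipschitz `f`, then `−γ′(t) ∈ ∂ᶜf(γ(t))` for a.e. `t ∈ [0,T]`. -/
theorem stmt16 {n : ℕ} (f : EuclideanSpace ℝ (Fin n) → ℝ)
    (hf : LocallyLipschitz f)
    (T : ℝ) (hT : 0 < T) (Ti : ℕ → ℝ) (hTi : ∀ i, 0 < Ti i)
    (hTconv : Tendsto Ti atTop (nhds T))
    (K : NNReal)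
    (γi : ℕ → ℝ → EuclideanSpace ℝ (Fin n))
    (hγi : ∀ i, LipschitzOnWith K (γi i) (Set.Icc 0 (Ti i)))
    (γ : ℝ → EuclideanSpace ℝ (Fin n)) (hγ : LipschitzOnWith K γ (Set.Icc 0 T))
    (hconv : Tendsto (fun i => ⨆ t : Set.Icc 0 (min (Ti i) T), ‖γ t - γi i t‖)
      atTop (nhds 0))
    (γi' : ℕ → ℝ → EuclideanSpace ℝ (Fin n))
    (hγi' : ∀ i, ∀ᵐ t : ℝ, t ∈ Set.Icc 0 (Ti i) → HasDerivAt (γi i) (γi' i t) t)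
    (hdist : Tendsto (fun i => ∫ t in (0:ℝ)..(Ti i),
        Metric.infDist (γi i t, γi' i t)
          {p : EuclideanSpace ℝ (Fin n) × EuclideanSpace ℝ (Fin n) |
            -p.2 ∈ clarkeSubdiff f p.1}) atTop (nhds 0)) :
    ∀ᵐ t : ℝ, t ∈ Set.Icc 0 T →
      ∃ d, HasDerivAt γ d t ∧ -d ∈ clarkeSubdiff f (γ t) :=
  stmt16_general f hf T Ti hTconv K γi hγi γ hγ hconv γi' hγi' hdist
end
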